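/- arXiv:1804.02897 — 11 statements merged into one kernel-verified Lean document; each statement's English description precedes it below -/
import Mathlib

section
/- Let n ≥ 2 be a natural number and α, β real numbers with β > 0 and α² = n·β. Then every real n×n matrix M whose sum of entries equals n·α and whose sum of squared entries equals n·β satisfies det M = 0. -/
/-!
Since `(∑ f)² = card * ∑ f²` is the equality case of Cauchy–Schwarz, the identity
`∑ᵢ ∑ⱼ (fᵢ - fⱼ)² = 2 (card * ∑ f² - (∑ f)²)` applied to the `n²` entries of `M`, whose sum is `nα`
and whose sum of squares is `nβ` with `α² = nβ`, forces all entries of `M` to be equal.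
A matrix with two equal rows is singular.
-/

open Finset

namespace Finset

variable {ι R : Type*}

theorem sum_sum_sub_sq [CommRing R] (s : Finset ι) (f : ι → R) :
    ∑ i ∈ s, ∑ j ∈ s, (f i - f j) ^ 2 = 2 * (#s * ∑ i ∈ s, f i ^ 2 - (∑ i ∈ s, f i) ^ 2) := by
  simp only [sub_sq, sum_add_distrib, sum_sub_distrib, sum_const, nsmul_eq_mul, mul_assoc,
    ← mul_sum, ← sum_mul]
  ring

theorem eq_of_sq_sum_eq_card_mul_sum_sq [CommRing R] [LinearOrder R] [IsStrictOrderedRing R]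
    {s : Finset ι} {f : ι → R} (h : (∑ i ∈ s, f i) ^ 2 = #s * ∑ i ∈ s, f i ^ 2) {i j : ι}
    (hi : i ∈ s) (hj : j ∈ s) : f i = f j := by
  have hzero : ∑ i ∈ s, ∑ j ∈ s, (f i - f j) ^ 2 = 0 := by
    rw [sum_sum_sub_sq, h, sub_self, mul_zero]
  have hrow :=
    (sum_eq_zero_iff_of_nonneg fun _ _ ↦ sum_nonneg fun _ _ ↦ sq_nonneg _).mp hzero i hi
  have hij := (sum_eq_zero_iff_of_nonneg fun _ _ ↦ sq_nonneg _).mp hrow j hj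
  exact sub_eq_zero.mp (pow_eq_zero_iff two_ne_zero |>.mp hij)

end Finset

theorem Matrix.det_eq_zero_of_forall_eq {n R : Type*} [Fintype n] [DecidableEq n] [Nontrivial n]
    [CommRing R] (M : Matrix n n R) (h : ∀ i j k l, M i j = M k l) : M.det = 0 :=
  let ⟨i, k, hik⟩ := exists_pair_ne n
  det_zero_of_row_eq hik (funext fun j ↦ h i j k j)

theorem det_eq_zero_of_sq_sum_eq_general (n : ℕ) (hn : 2 ≤ n) (α β : ℝ)
    (h : α ^ 2 = n * β) :
    ∀ M : Matrix (Fin n) (Fin n) ℝ,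
      (∑ i, ∑ j, M i j) = n * α → (∑ i, ∑ j, (M i j) ^ 2) = n * β →
        M.det = 0 := by
  intro M hs hq
  have : Nontrivial (Fin n) := Fin.nontrivial_iff_two_le.mpr hn
  have hcs : (∑ p : Fin n × Fin n, M p.1 p.2) ^ 2
      = #(univ : Finset (Fin n × Fin n)) * ∑ p : Fin n × Fin n, M p.1 p.2 ^ 2 := by
    rw [Fintype.sum_prod_type, Fintype.sum_prod_type, hs, hq, card_univ, Fintype.card_prod,
      Fintype.card_fin, Nat.cast_mul, mul_pow, h]
    ring
  exact M.det_eq_zero_of_forall_eq fun i j k l ↦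
    eq_of_sq_sum_eq_card_mul_sum_sq hcs (mem_univ (i, j)) (mem_univ (k, l))

theorem det_eq_zero_of_sq_sum_eq (n : ℕ) (hn : 2 ≤ n) (α β : ℝ)
    (hβ : 0 < β) (h : α ^ 2 = n * β) :
    ∀ M : Matrix (Fin n) (Fin n) ℝ,
      (∑ i, ∑ j, M i j) = n * α → (∑ i, ∑ j, (M i j) ^ 2) = n * β →
        M.det = 0 :=
  det_eq_zero_of_sq_sum_eq_general n hn α β h
end

section
/- Let n ≥ 2 be a natural number and α, β real numbers with β > 0 and α² ≤ n·β. Then there exists a real n×n matrix M with sum of entries n·α and sum of squared entries n·β such that det M = α·((n·β − α²)/(n−1))^((n−1)/2). -/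
/-!
Take `M = r • 1 + x • J` with `J` the all-ones matrix, `r = √((nβ - α²)/(n - 1))` and
`x = (α - r)/n`. Since `J` has rank one, `M` has eigenvalue `r` with multiplicity `n - 1` and
eigenvalue `r + n x = α` on the all-ones vector, so `det M = α r ^ (n - 1)`; the entry sum is
`n (r + n x) = nα`, and the square sum is `n r² + 2 r (α - r) + (α - r)² = (n - 1) r² + α² = nβ`.
-/

namespace Matrix

variable {ι R : Type*} [DecidableEq ι]

lemma smul_one_add_of_const_apply [Semiring R] (r x : R) (i j : ι) :
    (r • 1 + of fun _ _ => x : Matrix ι ι R) i j = (if i = j then r else 0) + x := by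
  simp [one_apply]

lemma sum_smul_one_add_of_const [Fintype ι] [CommSemiring R] (r x : R) :
    ∑ i, ∑ j, (r • 1 + of fun _ _ => x : Matrix ι ι R) i j
      = Fintype.card ι * r + Fintype.card ι ^ 2 * x := by
  simp only [smul_one_add_of_const_apply, Finset.sum_add_distrib, Finset.sum_ite_eq,
    Finset.mem_univ, if_true, Finset.sum_const, Finset.card_univ, nsmul_eq_mul]
  ring

lemma sum_sq_smul_one_add_of_const [Fintype ι] [CommSemiring R] (r x : R) :
    ∑ i, ∑ j, (r • 1 + of fun _ _ => x : Matrix ι ι R) i j ^ 2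
      = Fintype.card ι * (r ^ 2 + 2 * r * x) + Fintype.card ι ^ 2 * x ^ 2 := by
  have hsq (i j : ι) : ((if i = j then r else 0) + x) ^ 2
      = (if i = j then r ^ 2 + 2 * r * x else 0) + x ^ 2 := by
    split_ifs <;> ring
  simp only [smul_one_add_of_const_apply, hsq, Finset.sum_add_distrib, Finset.sum_ite_eq,
    Finset.mem_univ, if_true, Finset.sum_const, Finset.card_univ, nsmul_eq_mul]
  ring

lemma det_smul_one_add_of_const {K : Type*} [Field K] (n : ℕ) (r x : K) :
    det (r • 1 + of fun _ _ => x : Matrix (Fin (n + 1)) (Fin (n + 1)) K)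
      = r ^ n * (r + (n + 1) * x) := by
  rcases eq_or_ne r 0 with rfl | hr
  · rcases n with _ | n
    · simp [det_unique]
    · rw [zero_pow n.succ_ne_zero, zero_mul]
      refine det_zero_of_row_eq (i := 0) (j := 1) Fin.zero_ne_one ?_
      funext k
      simp
  · have hrank_one : r • (1 : Matrix (Fin (n + 1)) (Fin (n + 1)) K) + of (fun _ _ => x)
        = r • (1 + replicateCol Unit (fun _ => x / r) * replicateRow Unit (fun _ => (1 : K)) :
          Matrix (Fin (n + 1)) (Fin (n + 1)) K) := by
      ext i j
      simp [mul_apply, mul_add, mul_div_cancel₀ _ hr]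
    rw [hrank_one, det_smul, det_one_add_replicateCol_mul_replicateRow]
    simp only [dotProduct, Finset.sum_const, Finset.card_univ, Fintype.card_fin,
      nsmul_eq_mul, pow_succ]
    field_simp
    push_cast
    ring

end Matrix

lemma Real.sqrt_pow_eq_rpow {t : ℝ} (ht : 0 ≤ t) (k : ℕ) : √t ^ k = t ^ ((k : ℝ) / 2) := by
  rw [Real.sqrt_eq_rpow, ← Real.rpow_natCast, ← Real.rpow_mul ht]
  ring_nf

theorem exists_matrix_det_eq_gasper_general (n : ℕ) (hn : 2 ≤ n) (α β : ℝ)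
    (h : α ^ 2 ≤ n * β) :
    ∃ M : Matrix (Fin n) (Fin n) ℝ,
      (∑ i, ∑ j, M i j) = n * α ∧ (∑ i, ∑ j, (M i j) ^ 2) = n * β ∧
        M.det = α * ((n * β - α ^ 2) / (n - 1)) ^ (((n : ℝ) - 1) / 2) := by
  obtain ⟨m, rfl⟩ : ∃ m, n = m + 1 := ⟨n - 1, by omega⟩
  have hm : (0 : ℝ) < m := by exact_mod_cast (by omega : 0 < m)
  push_cast at h ⊢
  set t := ((m + 1) * β - α ^ 2) / (m + 1 - 1)
  have ht : 0 ≤ t := div_nonneg (by linarith) (by linarith)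
  set r := √t
  have hr : r ^ 2 = t := Real.sq_sqrt ht
  set x := (α - r) / (m + 1)
  have hx : (m + 1) * x = α - r := by simp only [x]; field_simp
  refine ⟨r • 1 + Matrix.of fun _ _ => x, ?_, ?_, ?_⟩
  · rw [Matrix.sum_smul_one_add_of_const, Fintype.card_fin]; push_cast
    linear_combination (m + 1) * hx
  · rw [Matrix.sum_sq_smul_one_add_of_const, Fintype.card_fin]; push_cast
    have hmt : m * t = (m + 1) * β - α ^ 2 := by simp only [t, add_sub_cancel_right]; field_simp
    linear_combination (2 * r + (m + 1) * x + α - r) * hx + m * hr + hmt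
  · rw [Matrix.det_smul_one_add_of_const, Real.sqrt_pow_eq_rpow ht, hx, add_sub_cancel_right,
      add_sub_cancel, mul_comm]

theorem exists_matrix_det_eq_gasper (n : ℕ) (hn : 2 ≤ n) (α β : ℝ)
    (hβ : 0 < β) (h : α ^ 2 ≤ n * β) :
    ∃ M : Matrix (Fin n) (Fin n) ℝ,
      (∑ i, ∑ j, M i j) = n * α ∧ (∑ i, ∑ j, (M i j) ^ 2) = n * β ∧
        M.det = α * ((n * β - α ^ 2) / (n - 1)) ^ (((n : ℝ) - 1) / 2) :=
  exists_matrix_det_eq_gasper_general n hn α β h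
end

section
/- Let n ≥ 2 be a natural number and α, β real numbers with β > 0 and α² ≤ β. Then there exists a real n×n matrix M with sum of entries n·α and sum of squared entries n·β such that det M = β^(n/2). -/
/-!
Put `σ = √β` and `M = σ • Q` with `Q` a rotation (`Q * Qᵀ = 1`, `det Q = 1`). Then the squares of
the entries of `M` sum to `σ² · tr (Q * Qᵀ) = n β` and `det M = σⁿ = β ^ (n / 2)`. Taking for `Q`
the rotation by the angle `arccos (α / σ)` in a plane containing the all-ones vector `𝟙`, which is
possible because `α² ≤ β`, gives `𝟙ᵀ Q 𝟙 = n α / σ`, i.e. the entries of `M` sum to `n α`.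
-/

open Matrix

namespace Matrix

variable {m n R : Type*}

section CommRing

variable [Fintype m] [DecidableEq m] [DecidableEq n] [CommRing R]

/-- For `Uᵀ * U = 1`, this acts as `A` on the column space of `U` (in the basis of its columns)
and as the identity on the orthogonal complement. -/
def extendAlong (U : Matrix n m R) (A : Matrix m m R) : Matrix n n R :=
  1 + U * (A - 1) * Uᵀ

theorem extendAlong_one (U : Matrix n m R) : extendAlong U 1 = 1 := by
  simp [extendAlong]

theorem transpose_extendAlong (U : Matrix n m R) (A : Matrix m m R) :
    (extendAlong U A)ᵀ = extendAlong U Aᵀ := by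
  simp [extendAlong, transpose_mul, Matrix.mul_assoc]

variable [Fintype n]

theorem extendAlong_mul {U : Matrix n m R} (hU : Uᵀ * U = 1) (A B : Matrix m m R) :
    extendAlong U A * extendAlong U B = extendAlong U (A * B) := by
  have hAB : A * B - 1 = (A - 1) + (B - 1) + (A - 1) * (B - 1) := by noncomm_ring
  have hUU : U * (A - 1) * Uᵀ * (U * (B - 1) * Uᵀ) = U * ((A - 1) * (B - 1)) * Uᵀ := by
    simp only [Matrix.mul_assoc]; rw [← Matrix.mul_assoc Uᵀ U, hU, Matrix.one_mul]
  simp only [extendAlong, hAB, Matrix.mul_add, Matrix.add_mul, Matrix.mul_one, Matrix.one_mul, hUU]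
  abel

theorem det_extendAlong {U : Matrix n m R} (hU : Uᵀ * U = 1) (A : Matrix m m R) :
    (extendAlong U A).det = A.det := by
  rw [extendAlong, Matrix.mul_assoc, det_one_add_mul_comm, Matrix.mul_assoc, hU, Matrix.mul_one,
    add_sub_cancel]

theorem transpose_mul_extendAlong_mul {U : Matrix n m R} (hU : Uᵀ * U = 1) (A : Matrix m m R) :
    Uᵀ * extendAlong U A * U = A := by
  rw [extendAlong, Matrix.mul_add, Matrix.add_mul, Matrix.mul_one, hU]
  simp only [← Matrix.mul_assoc, hU, Matrix.one_mul]
  rw [Matrix.mul_assoc, hU, Matrix.mul_one, add_sub_cancel]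

end CommRing

variable [Fintype n] [CommSemiring R]

theorem sum_sum_sq_eq_trace_mul_transpose [Fintype m] (Q : Matrix n m R) :
    ∑ i, ∑ j, Q i j ^ 2 = trace (Q * Qᵀ) := by
  simp [trace, mul_apply, sq]

theorem transpose_mul_mul_apply_self_of_col_eq {U : Matrix n m R} {k : m} {a : R}
    (hU : ∀ i, U i k = a) (Q : Matrix n n R) :
    (Uᵀ * Q * U) k k = a ^ 2 * ∑ i, ∑ j, Q i j := by
  simp only [mul_apply, transpose_apply, hU, ← Finset.mul_sum, ← Finset.sum_mul]
  rw [Finset.sum_comm]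
  ring

end Matrix

/-- The orthonormal columns `𝟙 / √(m + 2)` and `(e₀ - e₁) / √2`. -/
noncomputable def onesFrame (m : ℕ) : Matrix (Fin (m + 2)) (Fin 2) ℝ :=
  (of ![fun _ => (√(m + 2 : ℝ))⁻¹, Fin.cons (√2)⁻¹ (Fin.cons (-(√2)⁻¹) 0)])ᵀ

theorem onesFrame_apply_zero (m : ℕ) (i : Fin (m + 2)) : onesFrame m i 0 = (√(m + 2 : ℝ))⁻¹ := rfl

theorem transpose_onesFrame_mul_self (m : ℕ) : (onesFrame m)ᵀ * onesFrame m = 1 := by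
  have h2 : (√2 : ℝ)⁻¹ ^ 2 = 1 / 2 := by rw [inv_pow, Real.sq_sqrt zero_le_two, one_div]
  have hm : (√(m + 2 : ℝ))⁻¹ ^ 2 = 1 / (m + 2) := by
    rw [inv_pow, Real.sq_sqrt (by positivity), one_div]
  ext k l
  fin_cases k <;> fin_cases l <;> simp [onesFrame, mul_apply, Fin.sum_univ_succ, ← sq, h2, hm]
  · exact mul_inv_cancel₀ (by positivity)
  · norm_num

theorem rotation_mul_transpose {c s : ℝ} (h : c ^ 2 + s ^ 2 = 1) :
    !![c, -s; s, c] * (!![c, -s; s, c])ᵀ = 1 := by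
  ext i j
  fin_cases i <;> fin_cases j <;> simp [mul_apply, Fin.sum_univ_two] <;> linarith

theorem exists_orthogonal_det_eq_one_sum_eq (m : ℕ) {c : ℝ} (hc : c ^ 2 ≤ 1) :
    ∃ Q : Matrix (Fin (m + 2)) (Fin (m + 2)) ℝ,
      Q * Qᵀ = 1 ∧ Q.det = 1 ∧ ∑ i, ∑ j, Q i j = (m + 2) * c := by
  set s := √(1 - c ^ 2)
  have hcs : c ^ 2 + s ^ 2 = 1 := by rw [Real.sq_sqrt (by linarith)]; ring
  have hU := transpose_onesFrame_mul_self m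
  refine ⟨extendAlong (onesFrame m) !![c, -s; s, c], ?_, ?_, ?_⟩
  · rw [transpose_extendAlong, extendAlong_mul hU, rotation_mul_transpose hcs, extendAlong_one]
  · rw [det_extendAlong hU, det_fin_two_of]; linarith
  · have hcorner := transpose_mul_mul_apply_self_of_col_eq (onesFrame_apply_zero m)
      (extendAlong (onesFrame m) !![c, -s; s, c])
    rw [transpose_mul_extendAlong_mul hU, inv_pow, Real.sq_sqrt (by positivity)] at hcorner
    simp only [of_apply, cons_val', cons_val_zero, empty_val', cons_val_fin_one] at hcorner
    exact ((eq_inv_mul_iff_mul_eq₀ (by positivity)).1 hcorner).symm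

theorem exists_matrix_det_eq_beta_pow (n : ℕ) (hn : 2 ≤ n) (α β : ℝ)
    (hβ : 0 < β) (h : α ^ 2 ≤ β) :
    ∃ M : Matrix (Fin n) (Fin n) ℝ,
      (∑ i, ∑ j, M i j) = n * α ∧ (∑ i, ∑ j, (M i j) ^ 2) = n * β ∧
        M.det = β ^ ((n : ℝ) / 2) := by
  obtain ⟨m, rfl⟩ : ∃ m, n = m + 2 := ⟨n - 2, by omega⟩
  set σ := √β
  have hσ : 0 < σ := Real.sqrt_pos.2 hβ
  have hσβ : σ ^ 2 = β := Real.sq_sqrt hβ.le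
  have hc : (α / σ) ^ 2 ≤ 1 := by rwa [div_pow, hσβ, div_le_one hβ]
  obtain ⟨Q, hQQ, hdet, hsum⟩ := exists_orthogonal_det_eq_one_sum_eq m hc
  refine ⟨σ • Q, ?_, ?_, ?_⟩
  · simp only [Matrix.smul_apply, smul_eq_mul, ← Finset.mul_sum, hsum]
    field_simp
    push_cast; ring
  · simp only [Matrix.smul_apply, smul_eq_mul, mul_pow, ← Finset.mul_sum]
    rw [sum_sum_sq_eq_trace_mul_transpose, hQQ, trace_one, Fintype.card_fin, hσβ]
    push_cast; ring
  · rw [det_smul, hdet, mul_one, Fintype.card_fin, Real.rpow_div_two_eq_sqrt _ hβ.le,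
      Real.rpow_natCast]
end

section
/- Let n ≥ 2 be a natural number and α, β real numbers with β > 0 and α² ≤ n·β. Then |α|·((n·β − α²)/(n−1))^((n−1)/2) ≤ β^(n/2), with equality if and only if α² = β. -/
/-!
Put `a = (n β - α²) / (n - 1) ≥ 0`, so that `α² + (n - 1) a = n β`. Weighted AM-GM with weights
`1/n` and `(n-1)/n` gives `(α²)^(1/n) a^((n-1)/n) ≤ β`, with equality iff `α² = a`, i.e. iff
`α² = β`; raising both sides to the power `n/2` is the claim.
-/

namespace Real

lemma rpow_geom_mean_two_weighted {r x a : ℝ} (hr : 0 < r) (hx : 0 ≤ x) (ha : 0 ≤ a) :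
    (x ^ (1 / r) * a ^ ((r - 1) / r)) ^ (r / 2) = x ^ (1 / 2 : ℝ) * a ^ ((r - 1) / 2) := by
  rw [mul_rpow (by positivity) (by positivity), ← rpow_mul hx, ← rpow_mul ha]
  congr 2 <;> field_simp

theorem rpow_half_mul_rpow_le_mean_rpow {r x a : ℝ} (hr : 1 < r) (hx : 0 ≤ x) (ha : 0 ≤ a) :
    x ^ (1 / 2 : ℝ) * a ^ ((r - 1) / 2) ≤ ((x + (r - 1) * a) / r) ^ (r / 2) ∧
      (x ^ (1 / 2 : ℝ) * a ^ ((r - 1) / 2) = ((x + (r - 1) * a) / r) ^ (r / 2) ↔ x = a) := by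
  have hr₀ : 0 < r := by linarith
  have hw : 1 / r + (r - 1) / r = 1 := by field_simp; ring
  have hmean : (x + (r - 1) * a) / r = 1 / r * x + (r - 1) / r * a := by field_simp
  have hG : 0 ≤ x ^ (1 / r) * a ^ ((r - 1) / r) := by positivity
  have hM : 0 ≤ 1 / r * x + (r - 1) / r * a := by
    have : 0 ≤ r - 1 := by linarith
    positivity
  rw [← rpow_geom_mean_two_weighted hr₀ hx ha, hmean]
  refine ⟨rpow_le_rpow hG ?_ (by positivity), ?_⟩
  · exact geom_mean_le_arith_mean2_weighted (by positivity) (by bound) hx ha hw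
  · rw [rpow_left_inj hG hM (by positivity)]
    exact geom_mean_eq_arith_mean2_weighted_iff_of_pos (by positivity) (by bound) hx ha hw

end Real

theorem gasper_bound_compare_general (n : ℕ) (hn : 2 ≤ n) (α β : ℝ)
    (h : α ^ 2 ≤ n * β) :
    |α| * ((n * β - α ^ 2) / (n - 1)) ^ (((n : ℝ) - 1) / 2) ≤ β ^ ((n : ℝ) / 2)
      ∧ (|α| * ((n * β - α ^ 2) / (n - 1)) ^ (((n : ℝ) - 1) / 2) = β ^ ((n : ℝ) / 2)
          ↔ α ^ 2 = β) := by
  have hn₁ : (1 : ℝ) < n := by exact_mod_cast hn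
  set a := (n * β - α ^ 2) / (n - 1) with ha_def
  have ha : 0 ≤ a := div_nonneg (by linarith) (by linarith)
  have hmean : (α ^ 2 + (n - 1) * a) / n = β := by
    have : (n : ℝ) - 1 ≠ 0 := by linarith
    rw [ha_def]; field_simp; ring
  have habs : |α| = (α ^ 2) ^ (1 / 2 : ℝ) := by rw [← Real.sqrt_eq_rpow, Real.sqrt_sq_eq_abs]
  have hsq_eq : α ^ 2 = a ↔ α ^ 2 = β := by
    rw [ha_def, eq_div_iff (by linarith)]
    constructor <;> intro h' <;> nlinarith
  rw [habs, ← hsq_eq]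
  simpa only [hmean] using Real.rpow_half_mul_rpow_le_mean_rpow hn₁ (sq_nonneg α) ha

theorem gasper_bound_compare (n : ℕ) (hn : 2 ≤ n) (α β : ℝ)
    (hβ : 0 < β) (h : α ^ 2 ≤ n * β) :
    |α| * ((n * β - α ^ 2) / (n - 1)) ^ (((n : ℝ) - 1) / 2) ≤ β ^ ((n : ℝ) / 2)
      ∧ (|α| * ((n * β - α ^ 2) / (n - 1)) ^ (((n : ℝ) - 1) / 2) = β ^ ((n : ℝ) / 2)
          ↔ α ^ 2 = β) :=
  gasper_bound_compare_general n hn α β h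
end

section
/- Let n ≥ 2 be a natural number and α, β real numbers with β > 0, α² < n·β and α² ≤ β. Let M be a real n×n matrix with sum of entries n·α and sum of squared entries n·β whose determinant is maximal among all such matrices (i.e. det X ≤ det M for every real n×n matrix X with s(X) = n·α and q(X) = n·β). Then M·Mᵀ = β·I and det M = β^(n/2). -/
/-!
The Gram matrix `M Mᵀ` is positive semidefinite with trace `q(M) = nβ`, so by AM-GM on its
eigenvalues `det M ^ 2 = det (M Mᵀ) ≤ β ^ n`, with equality only if every eigenvalue equals `β`,
i.e. `M Mᵀ = β I`. The bound is attained under the constraints: if `c = α / √β` (so `|c| ≤ 1`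
as `α² ≤ β`) and `R` is the rotation by `arccos c` in the plane spanned by `𝟙 / √n` and
`(e₀ - e₁) / √2`, then `√β R` has entry sum `nα`, squared entry sum `nβ` and determinant
`√β ^ n`. Hence a maximiser has `det M ^ 2 = β ^ n`.
-/

open Matrix Finset

theorem Real.eq_of_sum_eq_card_mul_of_pow_card_le_prod {ι : Type*} [Fintype ι] {z : ι → ℝ}
    {β : ℝ} (hβ : 0 ≤ β) (hz : ∀ i, 0 ≤ z i) (hsum : ∑ i, z i = Fintype.card ι * β)
    (hprod : β ^ Fintype.card ι ≤ ∏ i, z i) (i : ι) : z i = β := by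
  have : Nonempty ι := ⟨i⟩
  have hcard : Fintype.card ι ≠ 0 := Fintype.card_ne_zero
  set w : ι → ℝ := fun _ => (Fintype.card ι : ℝ)⁻¹
  have hw : ∑ j, w j = 1 := by simp [w, hcard]
  have hmean : ∑ j, w j * z j = β := by
    rw [← Finset.mul_sum, hsum]
    field_simp
  have hgeom : β ≤ ∏ j, z j ^ w j := by
    rw [Real.finsetProd_rpow _ _ fun j _ => hz j]
    calc β = (β ^ Fintype.card ι) ^ (Fintype.card ι : ℝ)⁻¹ :=
          (Real.pow_rpow_inv_natCast hβ hcard).symm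
      _ ≤ _ := by gcongr
  have heq := (Real.geom_mean_le_arith_mean_weighted univ w z (fun _ _ => by positivity) hw
    fun j _ => hz j).antisymm (hmean ▸ hgeom)
  have := (Real.geom_mean_eq_arith_mean_weighted_iff_of_pos' univ w z
    (fun _ _ => by positivity) hw fun j _ => hz j).mp heq i (mem_univ i)
  rwa [hmean] at this

namespace Matrix

section Fintype

variable {R : Type*} [CommRing R] {m k : Type*} [Fintype m] [Fintype k]

theorem sum_sum_eq_one_dotProduct_mulVec_one (X : Matrix m k R) :
    ∑ i, ∑ j, X i j = 1 ⬝ᵥ (X *ᵥ 1) := by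
  simp [dotProduct, mulVec]

theorem trace_mul_transpose_self (M : Matrix m k ℝ) :
    (M * Mᵀ).trace = ∑ i, ∑ j, M i j ^ 2 := by
  simp [trace, mul_apply, sq]

theorem mul_transpose_eq_one_of_orthonormal {u v : m → R} (hu : u ⬝ᵥ u = 1) (hv : v ⬝ᵥ v = 1)
    (huv : u ⬝ᵥ v = 0) : of ![u, v] * (of ![u, v])ᵀ = 1 := by
  ext a b
  fin_cases a <;> fin_cases b
  exacts [hu, huv, (dotProduct_comm v u).trans huv, hv]

end Fintype

theorem rotation_mul_transpose {R : Type*} [CommRing R] {c s : R} (h : c ^ 2 + s ^ 2 = 1) :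
    !![c, -s; s, c] * (!![c, -s; s, c])ᵀ = 1 := by
  ext i j
  fin_cases i <;> fin_cases j <;>
    simp [mul_apply, Fin.sum_univ_two, ← sq, h, add_comm (s ^ 2), mul_comm s c]

theorem det_rotation {R : Type*} [CommRing R] {c s : R} (h : c ^ 2 + s ^ 2 = 1) :
    (!![c, -s; s, c]).det = 1 := by
  rw [det_fin_two_of]
  linear_combination h

section ExtendByOne

variable {R : Type*} [CommRing R] {m k : Type*} [Fintype m] [Fintype k] [DecidableEq m]
  [DecidableEq k]

/-- When `Uᵀ U = 1`, this acts as `A` on the columns of `U` and as the identity on their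
orthogonal complement. -/
def extendByOne (U : Matrix m k R) (A : Matrix k k R) : Matrix m m R :=
  1 + U * (A - 1) * Uᵀ

theorem extendByOne_mul_transpose {U : Matrix m k R} (hU : Uᵀ * U = 1) {A : Matrix k k R}
    (hA : A * Aᵀ = 1) : extendByOne U A * (extendByOne U A)ᵀ = 1 := by
  set B := A - 1
  have hB : B + Bᵀ + B * Bᵀ = 0 := by
    simp only [B, transpose_sub, transpose_one, Matrix.sub_mul, Matrix.mul_sub, hA,
      Matrix.one_mul, Matrix.mul_one]
    abel
  calc extendByOne U A * (extendByOne U A)ᵀ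
      = 1 + U * B * Uᵀ + U * Bᵀ * Uᵀ + U * B * (Uᵀ * U) * Bᵀ * Uᵀ := by
        simp only [extendByOne, transpose_add, transpose_one, transpose_mul, transpose_transpose,
          Matrix.add_mul, Matrix.mul_add, Matrix.one_mul, Matrix.mul_one, Matrix.mul_assoc]
        abel
    _ = 1 + U * (B + Bᵀ + B * Bᵀ) * Uᵀ := by
        simp only [hU, Matrix.mul_one, Matrix.mul_add, Matrix.add_mul, Matrix.mul_assoc]
        abel
    _ = 1 := by simp [hB]

theorem det_extendByOne {U : Matrix m k R} (hU : Uᵀ * U = 1) (A : Matrix k k R) :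
    (extendByOne U A).det = A.det := by
  rw [extendByOne, det_one_add_mul_comm, ← Matrix.mul_assoc, hU, Matrix.one_mul, add_sub_cancel]

theorem sum_sum_extendByOne (U : Matrix m k R) (A : Matrix k k R) :
    ∑ i, ∑ j, extendByOne U A i j
      = Fintype.card m + (1 ᵥ* U) ⬝ᵥ ((A - 1) *ᵥ (1 ᵥ* U)) := by
  rw [sum_sum_eq_one_dotProduct_mulVec_one, extendByOne, add_mulVec, dotProduct_add, one_mulVec,
    ← mulVec_mulVec, ← mulVec_mulVec, dotProduct_mulVec, mulVec_transpose]
  simp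

end ExtendByOne

theorem exists_mul_transpose_eq_one_det_eq_one_sum_sum_eq {n : ℕ} (hn : 2 ≤ n) {c : ℝ}
    (hc : c ^ 2 ≤ 1) : ∃ Q : Matrix (Fin n) (Fin n) ℝ,
      Q * Qᵀ = 1 ∧ Q.det = 1 ∧ ∑ i, ∑ j, Q i j = n * c := by
  set i₀ : Fin n := ⟨0, by omega⟩
  set i₁ : Fin n := ⟨1, by omega⟩
  have hne : i₀ ≠ i₁ := by simp [i₀, i₁, Fin.ext_iff]
  have hn0 : (n : ℝ) ≠ 0 := by positivity
  set u : Fin n → ℝ := (√n)⁻¹ • 1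
  set v : Fin n → ℝ := (√2)⁻¹ • (Pi.single i₀ 1 - Pi.single i₁ 1)
  have hu : u ⬝ᵥ u = 1 := by
    simp [u, smul_dotProduct, dotProduct_smul, ← mul_assoc, ← mul_inv, hn0]
  have hv : v ⬝ᵥ v = 1 := by
    simp [v, dotProduct_smul, dotProduct_sub, hne, hne.symm, ← two_mul, ← mul_assoc,
      inv_mul_eq_div, Real.div_sqrt]
  have huv : u ⬝ᵥ v = 0 := by simp [u, v, dotProduct_smul, dotProduct_sub]
  set U := (of ![u, v])ᵀ
  have hU : Uᵀ * U = 1 := by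
    simpa [U] using mul_transpose_eq_one_of_orthonormal hu hv huv
  have hu1 : u ⬝ᵥ 1 = √n := by simp [u, smul_dotProduct, inv_mul_eq_div]
  have hv1 : v ⬝ᵥ 1 = 0 := by simp [v, smul_dotProduct, sub_dotProduct]
  have hUsum : 1 ᵥ* U = ![√n, 0] := by
    rw [vecMul_transpose]
    ext k
    fin_cases k
    exacts [hu1, hv1]
  have hcs : c ^ 2 + √(1 - c ^ 2) ^ 2 = 1 := by
    rw [Real.sq_sqrt (by linarith)]
    ring
  set R := !![c, -√(1 - c ^ 2); √(1 - c ^ 2), c]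
  refine ⟨extendByOne U R, extendByOne_mul_transpose hU (rotation_mul_transpose hcs),
    (det_extendByOne hU R).trans (det_rotation hcs), ?_⟩
  calc ∑ i, ∑ j, extendByOne U R i j = n + ![√n, 0] ⬝ᵥ ((R - 1) *ᵥ ![√n, 0]) := by
        rw [sum_sum_extendByOne, hUsum, Fintype.card_fin]
    _ = n + √n * ((c - 1) * √n) := by simp [R, mulVec, dotProduct, Fin.sum_univ_two]
    _ = n * c := by linear_combination (c - 1) * Real.mul_self_sqrt n.cast_nonneg

theorem exists_sum_sum_eq_sum_sum_sq_eq_det_eq {n : ℕ} (hn : 2 ≤ n) {α β : ℝ} (hβ : 0 < β)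
    (hαβ : α ^ 2 ≤ β) : ∃ X : Matrix (Fin n) (Fin n) ℝ,
      ∑ i, ∑ j, X i j = n * α ∧ ∑ i, ∑ j, X i j ^ 2 = n * β ∧ X.det = √β ^ n := by
  have hc : (α / √β) ^ 2 ≤ 1 := by
    rw [div_pow, Real.sq_sqrt hβ.le]
    exact div_le_one_of_le₀ hαβ hβ.le
  obtain ⟨Q, hQQ, hQdet, hQsum⟩ := exists_mul_transpose_eq_one_det_eq_one_sum_sum_eq hn hc
  refine ⟨√β • Q, ?_, ?_, ?_⟩
  · simp only [smul_apply, smul_eq_mul, ← mul_sum, hQsum]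
    field_simp
  · simp only [smul_apply, smul_eq_mul, mul_pow, ← mul_sum, ← trace_mul_transpose_self, hQQ,
      Real.sq_sqrt hβ.le]
    simp [mul_comm]
  · simp [hQdet]

variable {n : Type*} [Fintype n] [DecidableEq n]

theorem IsHermitian.eq_smul_one_of_eigenvalues_eq {G : Matrix n n ℝ} (hG : G.IsHermitian)
    {β : ℝ} (h : ∀ i, hG.eigenvalues i = β) : G = β • 1 := by
  rw [← Algebra.algebraMap_eq_smul_one]
  refine CFC.eq_algebraMap_of_spectrum_subset_singleton G β ?_ hG.isSelfAdjoint
  rw [hG.spectrum_real_eq_range_eigenvalues]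
  rintro _ ⟨i, rfl⟩
  exact h i

theorem mul_transpose_self_eq_smul_one_of_pow_le_det_sq (M : Matrix n n ℝ) {β : ℝ}
    (hβ : 0 ≤ β) (hq : ∑ i, ∑ j, M i j ^ 2 = Fintype.card n * β)
    (hdet : β ^ Fintype.card n ≤ M.det ^ 2) : M * Mᵀ = β • 1 := by
  have hG : (M * Mᵀ).PosSemidef := by
    simpa using posSemidef_self_mul_conjTranspose M
  refine hG.isHermitian.eq_smul_one_of_eigenvalues_eq
    (Real.eq_of_sum_eq_card_mul_of_pow_card_le_prod hβ hG.eigenvalues_nonneg ?_ ?_)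
  · rw [← hq, ← trace_mul_transpose_self]
    simpa using hG.isHermitian.trace_eq_sum_eigenvalues.symm
  · have := hG.isHermitian.det_eq_prod_eigenvalues
    simp only [RCLike.ofReal_real_eq_id, id, det_mul, det_transpose] at this
    rwa [← this, ← sq]

theorem det_sq_eq_of_mul_transpose_self_eq_smul_one {M : Matrix n n ℝ} {β : ℝ}
    (h : M * Mᵀ = β • 1) : M.det ^ 2 = β ^ Fintype.card n := by
  simpa [sq] using congrArg det h

end Matrix

theorem gasper_maximal_orthogonal_case_general (n : ℕ) (hn : 2 ≤ n) (α β : ℝ)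
    (hβ : 0 < β) (h2 : α ^ 2 ≤ β)
    (M : Matrix (Fin n) (Fin n) ℝ)
    (hq : (∑ i, ∑ j, (M i j) ^ 2) = n * β)
    (hmax : ∀ X : Matrix (Fin n) (Fin n) ℝ,
      (∑ i, ∑ j, X i j) = n * α → (∑ i, ∑ j, (X i j) ^ 2) = n * β →
        X.det ≤ M.det) :
    M * Mᵀ = β • (1 : Matrix (Fin n) (Fin n) ℝ)
      ∧ M.det = β ^ ((n : ℝ) / 2) := by
  obtain ⟨X, hXs, hXq, hXdet⟩ := exists_sum_sum_eq_sum_sum_sq_eq_det_eq hn hβ h2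
  have hlow : √β ^ n ≤ M.det := hXdet ▸ hmax X hXs hXq
  have hsqrt_pow : (√β ^ n) ^ 2 = β ^ n := by
    rw [← pow_mul, mul_comm, pow_mul, Real.sq_sqrt hβ.le]
  have hMM : M * Mᵀ = β • 1 := by
    refine M.mul_transpose_self_eq_smul_one_of_pow_le_det_sq hβ.le (by simpa using hq) ?_
    simpa [← hsqrt_pow] using pow_le_pow_left₀ (by positivity) hlow 2
  refine ⟨hMM, ?_⟩
  have hdet : M.det = √β ^ n := by
    refine (sq_eq_sq₀ ((by positivity : 0 ≤ √β ^ n).trans hlow) (by positivity)).mp ?_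
    simpa [hsqrt_pow] using det_sq_eq_of_mul_transpose_self_eq_smul_one hMM
  rw [hdet, Real.sqrt_eq_rpow, ← Real.rpow_natCast, ← Real.rpow_mul hβ.le]
  congr 1
  ring

theorem gasper_maximal_orthogonal_case (n : ℕ) (hn : 2 ≤ n) (α β : ℝ)
    (hβ : 0 < β) (h1 : α ^ 2 < n * β) (h2 : α ^ 2 ≤ β)
    (M : Matrix (Fin n) (Fin n) ℝ)
    (hs : (∑ i, ∑ j, M i j) = n * α) (hq : (∑ i, ∑ j, (M i j) ^ 2) = n * β)
    (hmax : ∀ X : Matrix (Fin n) (Fin n) ℝ,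
      (∑ i, ∑ j, X i j) = n * α → (∑ i, ∑ j, (X i j) ^ 2) = n * β →
        X.det ≤ M.det) :
    M * Mᵀ = β • (1 : Matrix (Fin n) (Fin n) ℝ)
      ∧ M.det = β ^ ((n : ℝ) / 2) :=
  gasper_maximal_orthogonal_case_general n hn α β hβ h2 M hq hmax
end

section
/- Let n ≥ 2 be a natural number and M a real n×n matrix. Set β := q(M)/n, where q(M) is the sum of the squares of the entries of M. Then |det M| ≤ β^(n/2). -/
/-!
The Gram matrix `Mᵀ M` is positive semidefinite with `det (Mᵀ M) = (det M)²` and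
`tr (Mᵀ M) = q(M)`. Its eigenvalues are nonnegative with product `(det M)²` and sum `q(M)`,
so AM-GM gives `(det M)² ≤ (q(M) / n)ⁿ`; take square roots.
-/

open Finset Matrix

theorem Real.prod_le_sum_div_card_pow {ι : Type*} (s : Finset ι) {z : ι → ℝ}
    (hz : ∀ i ∈ s, 0 ≤ z i) : ∏ i ∈ s, z i ≤ ((∑ i ∈ s, z i) / #s) ^ #s := by
  rcases s.eq_empty_or_nonempty with rfl | hs
  · simp
  have hcard : (0 : ℝ) < #s := by exact_mod_cast hs.card_pos
  have amgm : ∏ i ∈ s, z i ^ ((1 : ℝ) / #s) ≤ ∑ i ∈ s, (1 / #s : ℝ) * z i :=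
    Real.geom_mean_le_arith_mean_weighted s _ z (fun _ _ => by positivity)
      (by simp [hcard.ne']) hz
  calc ∏ i ∈ s, z i = (∏ i ∈ s, z i ^ ((1 : ℝ) / #s)) ^ #s := by
        rw [← prod_pow]
        refine prod_congr rfl fun i hi => ?_
        rw [← Real.rpow_mul_natCast (hz i hi), one_div_mul_cancel hcard.ne', Real.rpow_one]
    _ ≤ (∑ i ∈ s, (1 / #s : ℝ) * z i) ^ #s :=
        pow_le_pow_left₀ (prod_nonneg fun i hi => Real.rpow_nonneg (hz i hi) _) amgm _
    _ = ((∑ i ∈ s, z i) / #s) ^ #s := by rw [← mul_sum, one_div_mul_eq_div]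

namespace Matrix

variable {m n : Type*} [Fintype m] [Fintype n]

theorem PosSemidef.det_le_trace_div_card_pow [DecidableEq n] {A : Matrix n n ℝ}
    (hA : A.PosSemidef) : A.det ≤ (A.trace / Fintype.card n) ^ Fintype.card n := by
  rw [hA.isHermitian.det_eq_prod_eigenvalues, hA.isHermitian.trace_eq_sum_eigenvalues]
  exact Real.prod_le_sum_div_card_pow univ fun i _ => hA.eigenvalues_nonneg i

theorem trace_transpose_mul_self (M : Matrix m n ℝ) :
    (Mᵀ * M).trace = ∑ i, ∑ j, M i j ^ 2 := by
  simp only [trace, diag, mul_apply, transpose_apply, sq]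
  exact sum_comm

theorem det_sq_le_sum_sq_div_card_pow [DecidableEq n] (M : Matrix n n ℝ) :
    M.det ^ 2 ≤ ((∑ i, ∑ j, M i j ^ 2) / Fintype.card n) ^ Fintype.card n := by
  have hgram : (Mᵀ * M).PosSemidef := by
    simpa only [conjTranspose_eq_transpose_of_trivial] using posSemidef_conjTranspose_mul_self M
  simpa only [det_mul, det_transpose, ← sq, trace_transpose_mul_self] using
    hgram.det_le_trace_div_card_pow

end Matrix

theorem abs_det_le_beta_pow_general (n : ℕ) (M : Matrix (Fin n) (Fin n) ℝ)
    (β : ℝ) (hβ : β = (∑ i, ∑ j, (M i j) ^ 2) / n) :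
    |M.det| ≤ β ^ ((n : ℝ) / 2) := by
  have hβ0 : 0 ≤ β := hβ ▸ by positivity
  have hsq : M.det ^ 2 ≤ β ^ n := by
    simpa only [Fintype.card_fin, ← hβ] using M.det_sq_le_sum_sq_div_card_pow
  calc |M.det| ≤ √(β ^ n) := Real.abs_le_sqrt hsq
    _ = β ^ ((n : ℝ) / 2) := by
      rw [Real.sqrt_eq_rpow, ← Real.rpow_natCast, ← Real.rpow_mul hβ0, mul_one_div]

theorem abs_det_le_beta_pow (n : ℕ) (hn : 2 ≤ n) (M : Matrix (Fin n) (Fin n) ℝ)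
    (β : ℝ) (hβ : β = (∑ i, ∑ j, (M i j) ^ 2) / n) :
    |M.det| ≤ β ^ ((n : ℝ) / 2) :=
  abs_det_le_beta_pow_general n M β hβ
end

section
/- Let n ≥ 2 be a natural number, A and B real n×n matrices, and M := A + iB the corresponding complex n×n matrix. Set α := s(A)/n, β := (q(A) + q(B))/n and κ := (2n·β − α²)/(2n−1). If α² ≥ β, then |det M| ≤ |α|^(1/2)·κ^((2n−1)/4), and moreover |α|^(1/2)·κ^((2n−1)/4) ≤ β^(n/2), with this last inequality strict when α² > β. -/
/-!
The eigenvalues of `Mᴴ * M` are nonnegative, sum to `∑ ‖M i k‖ ^ 2 = n β` and multiply to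
`‖det M‖ ^ 2`; testing `Mᴴ * M` on the all-ones vector and applying Cauchy–Schwarz shows that the
largest one, `λ`, is at least `α ^ 2 ≥ β`. AM–GM on `λ` and twice each other eigenvalue bounds
`‖det M‖ ^ 4` by `λ (2nβ - λ) ^ (2n - 1) / (2n - 1) ^ (2n - 1)`, and as `t ↦ t (2nβ - t) ^ (2n - 1)`
decreases for `t ≥ β`, `λ` may be replaced by `α ^ 2`, giving `α ^ 2 κ ^ (2n - 1)`. As `β` is the
mean of `α ^ 2` and `2n - 1` copies of `κ`, AM–GM once more gives `α ^ 2 κ ^ (2n - 1) ≤ β ^ (2n)`,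
with equality only if `α ^ 2 = κ`, i.e. `α ^ 2 = β`.
-/

open Finset Matrix
open scoped MatrixOrder ComplexOrder

namespace Real

theorem rpow_natCast_div_pow {x : ℝ} (hx : 0 ≤ x) (k : ℕ) {m : ℕ} (hm : m ≠ 0) :
    (x ^ ((k : ℝ) / m)) ^ m = x ^ k := by
  rw [← rpow_natCast, ← rpow_mul hx, div_mul_cancel₀ _ (Nat.cast_ne_zero.mpr hm),
    rpow_natCast]

variable {ι : Type*} (s : Finset ι) (w : ι → ℕ) {z : ι → ℝ}

theorem prod_pow_eq_prod_rpow_pow (hz : ∀ i ∈ s, 0 ≤ z i) (hw : ∑ i ∈ s, w i ≠ 0) :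
    ∏ i ∈ s, z i ^ w i =
      (∏ i ∈ s, z i ^ ((w i : ℝ) / ∑ i ∈ s, w i)) ^ ∑ i ∈ s, w i := by
  rw [← prod_pow]
  exact prod_congr rfl fun i hi => by rw [rpow_natCast_div_pow (hz i hi) _ hw]

theorem prod_pow_le_mean_pow (hz : ∀ i ∈ s, 0 ≤ z i) :
    ∏ i ∈ s, z i ^ w i ≤
      ((∑ i ∈ s, w i * z i) / ∑ i ∈ s, w i) ^ ∑ i ∈ s, w i := by
  rcases eq_or_ne (∑ i ∈ s, w i) 0 with h0 | h0
  · rw [h0, pow_zero]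
    exact (prod_eq_one fun i hi => by rw [sum_eq_zero_iff.mp h0 i hi, pow_zero]).le
  have hN : (0 : ℝ) < (∑ i ∈ s, w i : ℕ) := by positivity
  have hgm := geom_mean_le_arith_mean_weighted s (fun i => (w i : ℝ) / (∑ i ∈ s, w i : ℕ)) z
    (fun _ _ => by positivity) (by rw [← sum_div, ← Nat.cast_sum, div_self hN.ne']) hz
  rw [prod_pow_eq_prod_rpow_pow s w hz h0]
  refine pow_le_pow_left₀ (prod_nonneg fun i hi => rpow_nonneg (hz i hi) _) ?_ _
  simpa only [div_mul_eq_mul_div, ← sum_div] using hgm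

theorem prod_pow_lt_mean_pow (hz : ∀ i ∈ s, 0 ≤ z i)
    (h : ∃ j ∈ s, ∃ k ∈ s, w j ≠ 0 ∧ w k ≠ 0 ∧ z j ≠ z k) :
    ∏ i ∈ s, z i ^ w i < ((∑ i ∈ s, w i * z i) / ∑ i ∈ s, w i) ^ ∑ i ∈ s, w i := by
  obtain ⟨j, hj, k, hk, hwj, hwk, hzjk⟩ := h
  have h0 : ∑ i ∈ s, w i ≠ 0 := fun h0 => hwj (sum_eq_zero_iff.mp h0 j hj)
  have hN : (0 : ℝ) < (∑ i ∈ s, w i : ℕ) := by positivity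
  have hgm := (geom_mean_lt_arith_mean_weighted_iff_of_nonneg s
    (fun i => (w i : ℝ) / (∑ i ∈ s, w i : ℕ)) z (fun _ _ => by positivity)
    (by rw [← sum_div, ← Nat.cast_sum, div_self hN.ne']) hz).mpr
    ⟨j, hj, k, hk, div_ne_zero (by exact_mod_cast hwj) hN.ne',
      div_ne_zero (by exact_mod_cast hwk) hN.ne', hzjk⟩
  rw [prod_pow_eq_prod_rpow_pow s w hz h0]
  refine pow_lt_pow_left₀ ?_ (prod_nonneg fun i hi => rpow_nonneg (hz i hi) _) h0
  simpa only [div_mul_eq_mul_div, ← sum_div] using hgm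

theorem mul_pow_le_pow_succ_of_add_mul_eq {a x m : ℝ} (ha : 0 ≤ a) (hx : 0 ≤ x) {k : ℕ}
    (hm : a + k * x = (k + 1) * m) : a * x ^ k ≤ m ^ (k + 1) := by
  have := prod_pow_le_mean_pow univ ![1, k] (z := ![a, x]) (by simp [Fin.forall_fin_two, ha, hx])
  simp only [Fin.prod_univ_two, Fin.sum_univ_two] at this
  simpa [hm, add_comm 1 k, mul_div_cancel_left₀ m (Nat.cast_add_one_ne_zero k)] using this

theorem mul_pow_lt_pow_succ_of_add_mul_eq {a x m : ℝ} (ha : 0 ≤ a) (hx : 0 ≤ x) {k : ℕ}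
    (hk : k ≠ 0) (hax : a ≠ x) (hm : a + k * x = (k + 1) * m) : a * x ^ k < m ^ (k + 1) := by
  have := prod_pow_lt_mean_pow univ ![1, k] (z := ![a, x]) (by simp [Fin.forall_fin_two, ha, hx])
    ⟨0, mem_univ _, 1, mem_univ _, one_ne_zero, hk, hax⟩
  simp only [Fin.prod_univ_two, Fin.sum_univ_two] at this
  simpa [hm, add_comm 1 k, mul_div_cancel_left₀ m (Nat.cast_add_one_ne_zero k)] using this

theorem abs_rpow_half_mul_rpow_div_four_pow_four (a : ℝ) {x : ℝ} (hx : 0 ≤ x) (k : ℕ) :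
    (|a| ^ ((1 : ℝ) / 2) * x ^ ((k : ℝ) / 4)) ^ 4 = a ^ 2 * x ^ k := by
  have ha := rpow_natCast_div_pow (abs_nonneg a) 1 two_ne_zero
  have hx := rpow_natCast_div_pow hx k four_ne_zero
  rw [Nat.cast_one, Nat.cast_ofNat, pow_one] at ha
  rw [Nat.cast_ofNat] at hx
  rw [mul_pow, hx, show 4 = 2 * 2 from rfl, pow_mul, ha, sq_abs]

theorem rpow_div_two_pow_four {x : ℝ} (hx : 0 ≤ x) (n : ℕ) :
    (x ^ ((n : ℝ) / 2)) ^ 4 = x ^ (2 * n) := by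
  have h := rpow_natCast_div_pow hx n two_ne_zero
  rw [Nat.cast_ofNat] at h
  rw [show 4 = 2 * 2 from rfl, pow_mul, h, ← pow_mul, mul_comm]

end Real

theorem pow_succ_add_mul_le_add_pow_succ {x d : ℝ} (hx : 0 ≤ x) (hd : 0 ≤ d) (k : ℕ) :
    x ^ (k + 1) + (k + 1) * x ^ k * d ≤ (x + d) ^ (k + 1) := by
  induction k with
  | zero => simp
  | succ k ih =>
    have hxk : 0 ≤ x ^ k := pow_nonneg hx k
    calc x ^ (k + 1 + 1) + ((k + 1 : ℕ) + 1) * x ^ (k + 1) * d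
        ≤ (x + d) * (x ^ (k + 1) + (k + 1) * x ^ k * d) := by
          push_cast; ring_nf; nlinarith [mul_nonneg (mul_nonneg hxk hd) hd]
      _ ≤ (x + d) * (x + d) ^ (k + 1) := mul_le_mul_of_nonneg_left ih (by linarith)
      _ = (x + d) ^ (k + 1 + 1) := by ring

theorem antitoneOn_mul_sub_pow (S : ℝ) (k : ℕ) :
    AntitoneOn (fun t => t * (S - t) ^ k) (Set.Icc (S / (k + 1)) S) := by
  rintro a ⟨haS, -⟩ b ⟨-, hbS⟩ hab
  obtain rfl | hab := hab.eq_or_lt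
  · rfl
  have hS : S ≤ (k + 1) * a := by rwa [div_le_iff₀' (by positivity)] at haS
  have hx : 0 ≤ S - b := by linarith
  have hd : 0 ≤ b - a := by linarith
  show b * (S - b) ^ k ≤ a * (S - a) ^ k
  cases k with
  | zero => push_cast at hS; linarith
  | succ k =>
    push_cast at hS
    have ha : 0 ≤ a := by nlinarith
    have bern := mul_le_mul_of_nonneg_left (pow_succ_add_mul_le_add_pow_succ hx hd k) ha
    have hxk := mul_le_mul_of_nonneg_right (show S - b ≤ (k + 1) * a by linarith)
      (mul_nonneg (pow_nonneg hx k) hd)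
    rw [show S - a = S - b + (b - a) by ring]
    nlinarith [pow_succ (S - b) k]

theorem sq_prod_le_mul_mean_pow {ι : Type*} [Fintype ι] [DecidableEq ι] {l : ι → ℝ}
    (hl : ∀ i, 0 ≤ l i) (j : ι) :
    (∏ i, l i) ^ 2 ≤ l j * ((2 * ∑ i, l i - l j) / (2 * Fintype.card ι - 1)) ^
      (2 * Fintype.card ι - 1) := by
  have hn : 1 ≤ Fintype.card ι := Fintype.card_pos_iff.mpr ⟨j⟩
  set w : ι → ℕ := fun i => if i = j then 1 else 2
  have hw : ∑ i, w i = 2 * Fintype.card ι - 1 := by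
    have h2 : ∑ i, (w i + if i = j then 1 else 0) = ∑ _i : ι, 2 :=
      sum_congr rfl fun i _ => by by_cases h : i = j <;> simp [w, h]
    rw [sum_add_distrib, sum_ite_eq' univ j, sum_const, card_univ, if_pos (mem_univ j),
      smul_eq_mul] at h2
    omega
  have hwl : ∑ i, (w i : ℝ) * l i = 2 * ∑ i, l i - l j := by
    have h2 : ∀ i, (w i : ℝ) = 2 - if i = j then 1 else 0 := fun i => by
      by_cases h : i = j <;> norm_num [w, h]
    simp only [h2, sub_mul, sum_sub_distrib, ← mul_sum, ite_mul, one_mul, zero_mul,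
      sum_ite_eq', mem_univ, if_true]
  have hsplit : (∏ i, l i) ^ 2 = l j * ∏ i, l i ^ w i := by
    have hcompl : ∏ i ∈ {j}ᶜ, l i ^ w i = ∏ i ∈ {j}ᶜ, l i ^ 2 :=
      prod_congr rfl fun i hi => by rw [show w i = 2 from if_neg (by simpa using hi)]
    rw [← prod_pow, Fintype.prod_eq_mul_prod_compl j,
      Fintype.prod_eq_mul_prod_compl j (fun i => l i ^ w i), hcompl]
    simp only [w, if_pos rfl]
    ring
  have hamgm := Real.prod_pow_le_mean_pow univ w fun i _ => hl i
  rw [hw, hwl, Nat.cast_sub (by omega)] at hamgm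
  push_cast at hamgm
  rw [hsplit]
  exact mul_le_mul_of_nonneg_left hamgm (hl j)

theorem sq_prod_le_of_mean_le_of_le {ι : Type*} [Fintype ι] [DecidableEq ι] {l : ι → ℝ}
    (hl : ∀ i, 0 ≤ l i) {a : ℝ} {j : ι} (hmean : (∑ i, l i) / Fintype.card ι ≤ a)
    (hj : a ≤ l j) :
    (∏ i, l i) ^ 2 ≤
      a * ((2 * ∑ i, l i - a) / (2 * Fintype.card ι - 1)) ^ (2 * Fintype.card ι - 1) := by
  set S := ∑ i, l i
  set n := Fintype.card ι
  have hn : 1 ≤ n := Fintype.card_pos_iff.mpr ⟨j⟩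
  have hn' : (1 : ℝ) ≤ n := by exact_mod_cast hn
  have hlS : l j ≤ S := single_le_sum (fun i _ => hl i) (mem_univ j)
  have hanti := antitoneOn_mul_sub_pow (2 * S) (2 * n - 1)
  rw [Nat.cast_sub (by omega), show 2 * S / ((2 * n : ℕ) - (1 : ℕ) + 1 : ℝ) = S / n by
    push_cast; field_simp; ring] at hanti
  have hmem : ∀ t, S / n ≤ t → t ≤ S → t ∈ Set.Icc (S / n) (2 * S) := fun t h1 h2 =>
    ⟨h1, by linarith [sum_nonneg fun i (_ : i ∈ univ) => hl i]⟩
  calc (∏ i, l i) ^ 2 ≤ l j * ((2 * S - l j) / (2 * n - 1)) ^ (2 * n - 1) :=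
        sq_prod_le_mul_mean_pow hl j
    _ = l j * (2 * S - l j) ^ (2 * n - 1) / (2 * n - 1) ^ (2 * n - 1) := by
        rw [div_pow, mul_div_assoc]
    _ ≤ a * (2 * S - a) ^ (2 * n - 1) / (2 * n - 1) ^ (2 * n - 1) :=
        div_le_div_of_nonneg_right (hanti (hmem a hmean (hj.trans hlS))
          (hmem _ (hmean.trans hj) hlS) hj) (pow_nonneg (by linarith [hn']) _)
    _ = _ := by rw [div_pow, mul_div_assoc]

namespace Matrix

variable {𝕜 n : Type*} [RCLike 𝕜] [Fintype n]

theorem re_star_dotProduct_conjTranspose_mul_self_mulVec (M : Matrix n n 𝕜) (x : n → 𝕜) :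
    RCLike.re (star x ⬝ᵥ (Mᴴ * M) *ᵥ x) = ∑ i, ‖(M *ᵥ x) i‖ ^ 2 := by
  rw [← mulVec_mulVec, dotProduct_mulVec, vecMul_conjTranspose, star_star]
  simp only [dotProduct, Pi.star_apply, RCLike.star_def, RCLike.conj_mul, map_sum]
  norm_cast

variable [DecidableEq n]

theorem sum_eigenvalues_conjTranspose_mul_self (M : Matrix n n 𝕜) :
    ∑ i, (isHermitian_conjTranspose_mul_self M).eigenvalues i =
      ∑ i, ∑ j, ‖M i j‖ ^ 2 := by
  have h := (isHermitian_conjTranspose_mul_self M).trace_eq_sum_eigenvalues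
  simp only [trace, diag_apply, mul_apply, conjTranspose_apply, RCLike.star_def,
    RCLike.conj_mul] at h
  rw [Finset.sum_comm] at h
  exact_mod_cast h.symm

theorem prod_eigenvalues_conjTranspose_mul_self (M : Matrix n n 𝕜) :
    ∏ i, (isHermitian_conjTranspose_mul_self M).eigenvalues i = ‖M.det‖ ^ 2 := by
  have h := (isHermitian_conjTranspose_mul_self M).det_eq_prod_eigenvalues
  rw [det_mul, det_conjTranspose, RCLike.star_def, RCLike.conj_mul] at h
  exact_mod_cast h.symm

theorem IsHermitian.re_dotProduct_mulVec_le {A : Matrix n n 𝕜} (hA : A.IsHermitian) {c : ℝ}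
    (hc : ∀ i, hA.eigenvalues i ≤ c) (x : n → 𝕜) :
    RCLike.re (star x ⬝ᵥ A *ᵥ x) ≤ c * RCLike.re (star x ⬝ᵥ x) := by
  have hle : A ≤ algebraMap ℝ _ c := le_algebraMap_of_spectrum_le (ha := hA.isSelfAdjoint) <| by
    rw [hA.spectrum_real_eq_range_eigenvalues]
    rintro _ ⟨i, rfl⟩
    exact hc i
  have := RCLike.nonneg_iff.mp ((Matrix.le_iff.mp hle).dotProduct_mulVec_nonneg x)
  simpa [sub_mulVec, Algebra.algebraMap_eq_smul_one, smul_mulVec, dotProduct_smul,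
    RCLike.smul_re] using this.1

theorem exists_sq_sum_re_div_card_le_eigenvalues_conjTranspose_mul_self [Nonempty n]
    (M : Matrix n n 𝕜) :
    ∃ j, ((∑ i, ∑ k, RCLike.re (M i k)) / Fintype.card n) ^ 2 ≤
      (isHermitian_conjTranspose_mul_self M).eigenvalues j := by
  set hH := isHermitian_conjTranspose_mul_self M
  obtain ⟨j, hj⟩ := Finite.exists_max hH.eigenvalues
  refine ⟨j, ?_⟩
  have hN : (0 : ℝ) < Fintype.card n := by exact_mod_cast Fintype.card_pos
  have hray := hH.re_dotProduct_mulVec_le hj (fun _ => 1)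
  have hone : RCLike.re (star (fun _ : n => (1 : 𝕜)) ⬝ᵥ fun _ => 1) = Fintype.card n := by
    simp [dotProduct]
  rw [re_star_dotProduct_conjTranspose_mul_self_mulVec, hone] at hray
  have hrow (i : n) : (∑ k, RCLike.re (M i k)) ^ 2 ≤ ‖(M *ᵥ fun _ => 1) i‖ ^ 2 := by
    have := RCLike.abs_re_le_norm ((M *ᵥ fun _ => 1) i)
    simp only [mulVec, dotProduct, mul_one, map_sum] at this ⊢
    exact sq_le_sq.mpr (by rwa [abs_norm])
  have hcs := sq_sum_le_card_mul_sum_sq (s := univ) (f := fun i => ∑ k, RCLike.re (M i k))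
  rw [card_univ] at hcs
  have key : (∑ i, ∑ k, RCLike.re (M i k)) ^ 2 ≤
      Fintype.card n * (hH.eigenvalues j * Fintype.card n) :=
    hcs.trans (mul_le_mul_of_nonneg_left ((sum_le_sum fun i _ => hrow i).trans hray) hN.le)
  rw [div_pow, div_le_iff₀ (by positivity)]
  linarith

theorem sq_sum_re_div_card_le_sum_norm_sq [Nonempty n] (M : Matrix n n 𝕜) :
    ((∑ i, ∑ k, RCLike.re (M i k)) / Fintype.card n) ^ 2 ≤ ∑ i, ∑ k, ‖M i k‖ ^ 2 := by
  obtain ⟨j, hj⟩ := exists_sq_sum_re_div_card_le_eigenvalues_conjTranspose_mul_self M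
  rw [← sum_eigenvalues_conjTranspose_mul_self]
  exact hj.trans <| single_le_sum
    (fun i _ => (posSemidef_conjTranspose_mul_self M).eigenvalues_nonneg i) (mem_univ j)

theorem norm_det_pow_four_le [Nonempty n] (M : Matrix n n 𝕜)
    (h : (∑ i, ∑ k, ‖M i k‖ ^ 2) / Fintype.card n ≤
      ((∑ i, ∑ k, RCLike.re (M i k)) / Fintype.card n) ^ 2) :
    ‖M.det‖ ^ 4 ≤ ((∑ i, ∑ k, RCLike.re (M i k)) / Fintype.card n) ^ 2 *
      ((2 * ∑ i, ∑ k, ‖M i k‖ ^ 2 - ((∑ i, ∑ k, RCLike.re (M i k)) / Fintype.card n) ^ 2) /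
        (2 * Fintype.card n - 1)) ^ (2 * Fintype.card n - 1) := by
  obtain ⟨j, hj⟩ := exists_sq_sum_re_div_card_le_eigenvalues_conjTranspose_mul_self M
  rw [← sum_eigenvalues_conjTranspose_mul_self] at h ⊢
  rw [show 4 = 2 * 2 from rfl, pow_mul, ← prod_eigenvalues_conjTranspose_mul_self]
  exact sq_prod_le_of_mean_le_of_le (posSemidef_conjTranspose_mul_self M).eigenvalues_nonneg h hj

end Matrix

theorem Matrix.re_map_ofReal_add_I_smul_map_ofReal {m n : Type*} (A B : Matrix m n ℝ)
    (i : m) (k : n) :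
    ((A.map (fun a => (a : ℂ)) + Complex.I • B.map (fun b => (b : ℂ))) i k).re = A i k := by
  simp

theorem Matrix.norm_sq_map_ofReal_add_I_smul_map_ofReal {m n : Type*} (A B : Matrix m n ℝ)
    (i : m) (k : n) :
    ‖(A.map (fun a => (a : ℂ)) + Complex.I • B.map (fun b => (b : ℂ))) i k‖ ^ 2 =
      A i k ^ 2 + B i k ^ 2 := by
  rw [Complex.sq_norm, Complex.normSq_apply]
  simp
  ring

theorem abs_det_complex_le_gasper_bound (n : ℕ) (hn : 2 ≤ n)
    (A B : Matrix (Fin n) (Fin n) ℝ)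
    (M : Matrix (Fin n) (Fin n) ℂ)
    (hM : M = A.map (fun a => (a : ℂ)) + Complex.I • B.map (fun b => (b : ℂ)))
    (α β κ : ℝ) (hα : α = (∑ i, ∑ j, A i j) / n)
    (hβ : β = ((∑ i, ∑ j, (A i j) ^ 2) + (∑ i, ∑ j, (B i j) ^ 2)) / n)
    (hκ : κ = (2 * n * β - α ^ 2) / (2 * n - 1))
    (h : β ≤ α ^ 2) :
    ‖M.det‖ ≤ |α| ^ ((1 : ℝ) / 2) * κ ^ ((2 * (n : ℝ) - 1) / 4)
      ∧ |α| ^ ((1 : ℝ) / 2) * κ ^ ((2 * (n : ℝ) - 1) / 4) ≤ β ^ ((n : ℝ) / 2)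
      ∧ (β < α ^ 2 →
          |α| ^ ((1 : ℝ) / 2) * κ ^ ((2 * (n : ℝ) - 1) / 4) < β ^ ((n : ℝ) / 2)) := by
  have hn' : (2 : ℝ) ≤ n := by exact_mod_cast hn
  have : Nonempty (Fin n) := ⟨⟨0, by omega⟩⟩
  have hs : ∑ i, ∑ k, (M i k).re = n * α := by
    simp only [hM, re_map_ofReal_add_I_smul_map_ofReal, hα]
    field_simp
  have hq : ∑ i, ∑ k, ‖M i k‖ ^ 2 = n * β := by
    simp only [hM, norm_sq_map_ofReal_add_I_smul_map_ofReal, sum_add_distrib, hβ]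
    field_simp
  have hα2 := sq_sum_re_div_card_le_sum_norm_sq M
  have hdet := norm_det_pow_four_le M
  simp only [RCLike.re_to_complex, hs, hq, Fintype.card_fin, ← mul_assoc, ← hκ,
    mul_div_cancel_left₀ _ (show (n : ℝ) ≠ 0 by positivity)] at hα2 hdet
  have hβ0 : 0 ≤ β := by nlinarith [sq_nonneg α]
  have hκ0 : 0 ≤ κ := by rw [hκ]; apply div_nonneg <;> nlinarith
  have hcast : ((2 * n - 1 : ℕ) : ℝ) = 2 * n - 1 := by
    push_cast [Nat.cast_sub (by omega : 1 ≤ 2 * n)]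
    ring
  have hmean : α ^ 2 + ((2 * n - 1 : ℕ) : ℝ) * κ = ((2 * n - 1 : ℕ) + 1) * β := by
    rw [hcast, hκ, mul_div_cancel₀ _ (by linarith)]
    ring
  have hR := Real.abs_rpow_half_mul_rpow_div_four_pow_four α hκ0 (2 * n - 1)
  have hB := Real.rpow_div_two_pow_four hβ0 n
  rw [hcast] at hR
  rw [← Nat.sub_add_cancel (by omega : 1 ≤ 2 * n)] at hB
  refine ⟨?_, ?_, fun hlt => ?_⟩
  · rw [← pow_le_pow_iff_left₀ (norm_nonneg _) (by positivity) four_ne_zero, hR]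
    exact hdet h
  · rw [← pow_le_pow_iff_left₀ (by positivity) (by positivity) four_ne_zero, hR, hB]
    exact Real.mul_pow_le_pow_succ_of_add_mul_eq (sq_nonneg α) hκ0 hmean
  · have hκβ : κ < β := by
      rw [hκ, div_lt_iff₀ (by linarith)]
      linarith
    rw [← pow_lt_pow_iff_left₀ (by positivity) (by positivity) four_ne_zero, hR, hB]
    exact Real.mul_pow_lt_pow_succ_of_add_mul_eq (sq_nonneg α) hκ0 (by omega)
      (hκβ.trans hlt).ne' hmean
end

section
/- Let n ≥ 2 be a natural number and M a real n×n matrix all of whose entries are 1 or −1. If |det M| = n^(n/2) (i.e. M is a Hadamard matrix), then the sum of all entries of M satisfies s(M) ≤ n·√n. -/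
/-!
The Gram matrix `Mᵀ M` of a `±1` matrix is positive semidefinite with trace `n²`, and the
determinant condition says its determinant is `nⁿ`. So its eigenvalues have arithmetic and
geometric mean `n`; by the equality case of AM-GM they all equal `n`, i.e. `Mᵀ M = n • 1`.
Then the row sums `rᵢ` satisfy `∑ rᵢ² = 1ᵀ Mᵀ M 1 = n²`, and Cauchy–Schwarz gives
`s(M)² = (∑ rᵢ)² ≤ n ∑ rᵢ² = n³`.
-/

open Finset Matrix
open scoped ComplexOrder

theorem Real.eq_of_prod_eq_pow_of_sum_eq_card_mul {ι : Type*} [Fintype ι] {x : ι → ℝ} {c : ℝ}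
    (hc : 0 ≤ c) (hx : ∀ i, 0 ≤ x i) (hprod : ∏ i, x i = c ^ Fintype.card ι)
    (hsum : ∑ i, x i = Fintype.card ι * c) (i : ι) : x i = c := by
  have : Nonempty ι := ⟨i⟩
  have hcard : (Fintype.card ι : ℝ) ≠ 0 := Nat.cast_ne_zero.mpr Fintype.card_ne_zero
  have hmean : ∑ j, (Fintype.card ι : ℝ)⁻¹ * x j = c := by
    rw [← mul_sum, hsum, inv_mul_cancel_left₀ hcard]
  have hgeom : ∏ j, x j ^ ((Fintype.card ι : ℝ)⁻¹) = c := by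
    rw [Real.finsetProd_rpow _ _ (fun j _ => hx j), hprod,
      Real.pow_rpow_inv_natCast hc (by exact_mod_cast hcard)]
  have := (Real.geom_mean_eq_arith_mean_weighted_iff_of_pos' univ _ x
    (fun _ _ => by positivity) (by simp [hcard]) (fun j _ => hx j)).mp
    (hgeom.trans hmean.symm) i (mem_univ i)
  rwa [hmean] at this

theorem Matrix.IsHermitian.eq_smul_one_of_eigenvalues_eq_s13 {n 𝕜 : Type*} [Fintype n] [DecidableEq n]
    [RCLike 𝕜] {A : Matrix n n 𝕜} (hA : A.IsHermitian) {c : ℝ} (h : ∀ i, hA.eigenvalues i = c) :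
    A = (c : 𝕜) • 1 := by
  have hdiag : diagonal (RCLike.ofReal ∘ hA.eigenvalues) = (c : 𝕜) • (1 : Matrix n n 𝕜) := by
    ext i j
    simp [diagonal_apply, one_apply, h]
  rw [hA.spectral_theorem, hdiag, map_smul, map_one]

theorem Matrix.PosSemidef.eq_smul_one_of_trace_of_det {n 𝕜 : Type*} [Fintype n] [DecidableEq n]
    [RCLike 𝕜] {A : Matrix n n 𝕜} (hA : A.PosSemidef) {c : ℝ} (hc : 0 ≤ c)
    (htrace : A.trace = (Fintype.card n * c : ℝ)) (hdet : A.det = (c ^ Fintype.card n : ℝ)) :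
    A = (c : 𝕜) • 1 := by
  refine hA.isHermitian.eq_smul_one_of_eigenvalues_eq_s13 fun i => ?_
  refine Real.eq_of_prod_eq_pow_of_sum_eq_card_mul hc hA.eigenvalues_nonneg ?_ ?_ i
  · exact_mod_cast hA.isHermitian.det_eq_prod_eigenvalues.symm.trans hdet
  · exact_mod_cast hA.isHermitian.trace_eq_sum_eigenvalues.symm.trans htrace

theorem Matrix.trace_transpose_mul_self_of_forall_eq_one_or_neg_one {m n R : Type*} [Fintype m]
    [Fintype n] [CommRing R] {M : Matrix m n R} (hM : ∀ i j, M i j = 1 ∨ M i j = -1) :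
    (Mᵀ * M).trace = Fintype.card m * Fintype.card n := by
  have hsq : ∀ i j, M i j * M i j = 1 := fun i j => by rcases hM i j with h | h <;> simp [h]
  simp [trace, mul_apply, hsq, mul_comm]

theorem Matrix.sum_sq_row_sum_eq_sum_transpose_mul_self {m n R : Type*} [Fintype m] [Fintype n]
    [CommSemiring R] (M : Matrix m n R) :
    ∑ i, (∑ j, M i j) ^ 2 = ∑ j, ∑ k, (Mᵀ * M) j k := by
  simp only [sq, sum_mul_sum, mul_apply, transpose_apply]
  rw [sum_comm]
  exact sum_congr rfl fun _ _ => sum_comm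

theorem Matrix.sq_sum_le_of_transpose_mul_self_eq_smul_one {m n : Type*} [Fintype m] [Fintype n]
    [DecidableEq n] {M : Matrix m n ℝ} {c : ℝ} (hM : Mᵀ * M = c • 1) :
    (∑ i, ∑ j, M i j) ^ 2 ≤ Fintype.card m * (Fintype.card n * c) := by
  calc (∑ i, ∑ j, M i j) ^ 2 ≤ Fintype.card m * ∑ i, (∑ j, M i j) ^ 2 :=
        sq_sum_le_card_mul_sum_sq
    _ = Fintype.card m * (Fintype.card n * c) := by
        simp [M.sum_sq_row_sum_eq_sum_transpose_mul_self, hM, one_apply]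

theorem best_excess_inequality_general (n : ℕ)
    (M : Matrix (Fin n) (Fin n) ℝ)
    (hentries : ∀ i j, M i j = 1 ∨ M i j = -1)
    (hdet : |M.det| = (n : ℝ) ^ ((n : ℝ) / 2)) :
    (∑ i, ∑ j, M i j) ≤ n * Real.sqrt n := by
  have hn : (0 : ℝ) ≤ n := n.cast_nonneg
  have hdet_sq : M.det ^ 2 = (n : ℝ) ^ n := by
    rw [← sq_abs, hdet, ← Real.rpow_mul_natCast hn, Nat.cast_two, div_mul_cancel₀ _ two_ne_zero,
      Real.rpow_natCast]
  have hgram : Mᵀ * M = (n : ℝ) • 1 := by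
    refine (posSemidef_conjTranspose_mul_self M).eq_smul_one_of_trace_of_det (c := n) hn ?_ ?_
    · simpa [sq] using trace_transpose_mul_self_of_forall_eq_one_or_neg_one hentries
    · simpa [sq] using hdet_sq
  calc (∑ i, ∑ j, M i j) ≤ |∑ i, ∑ j, M i j| := le_abs_self _
    _ ≤ n * Real.sqrt n := by
      refine abs_le_of_sq_le_sq ?_ (by positivity)
      rw [mul_pow, Real.sq_sqrt hn]
      simpa [sq, mul_assoc] using sq_sum_le_of_transpose_mul_self_eq_smul_one hgram

theorem best_excess_inequality (n : ℕ) (hn : 2 ≤ n)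
    (M : Matrix (Fin n) (Fin n) ℝ)
    (hentries : ∀ i j, M i j = 1 ∨ M i j = -1)
    (hdet : |M.det| = (n : ℝ) ^ ((n : ℝ) / 2)) :
    (∑ i, ∑ j, M i j) ≤ n * Real.sqrt n :=
  best_excess_inequality_general n M hentries hdet
end

section
/- Let n ≥ 2 be a natural number, ε > 0 a real number, and E a real n×n matrix with |E_{i,j}| ≤ ε for all i, j. Then |det(I − E)| ≤ (1 + 2ε + n·ε²)^(n/2). -/
/-!
Hadamard's inequality bounds `|det A|` by the product of the Euclidean lengths of the rows of `A`.
A row of `I - E` has squared length `1 - 2 E_{ii} + ∑_j E_{ij}² ≤ 1 + 2ε + nε²`, so the product of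
the `n` row lengths is at most `(1 + 2ε + nε²)^(n/2)`.
-/

namespace Matrix

theorem abs_det_le_prod_norm_row_fin {n : ℕ} (A : Matrix (Fin n) (Fin n) ℝ) :
    |A.det| ≤ ∏ i, ‖WithLp.toLp 2 (A i)‖ := by
  have : Fact (Module.finrank ℝ (EuclideanSpace ℝ (Fin n)) = n) := ⟨finrank_euclideanSpace_fin⟩
  let b := EuclideanSpace.basisFun (Fin n) ℝ
  have hdet : b.toBasis.det (fun i => WithLp.toLp 2 (A i)) = A.det := by
    rw [Module.Basis.det_apply, ← det_transpose A]
    congr 1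
  rw [← hdet, ← b.toBasis.orientation.volumeForm_robust' b]
  exact Orientation.abs_volumeForm_apply_le _ _

variable {ι : Type*} [Fintype ι] [DecidableEq ι]

theorem abs_det_le_prod_norm_row (A : Matrix ι ι ℝ) :
    |A.det| ≤ ∏ i, ‖WithLp.toLp 2 (A i)‖ := by
  let e := Fintype.equivFin ι
  have hrow (k : Fin (Fintype.card ι)) :
      ‖WithLp.toLp 2 (reindex e e A k)‖ = ‖WithLp.toLp 2 (A (e.symm k))‖ := by
    simp only [EuclideanSpace.norm_eq, reindex_apply, submatrix_apply, Real.norm_eq_abs, sq_abs]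
    rw [e.symm.sum_comp (fun j => A (e.symm k) j ^ 2)]
  calc |A.det| = |(reindex e e A).det| := by rw [det_reindex_self]
    _ ≤ ∏ k, ‖WithLp.toLp 2 (reindex e e A k)‖ := abs_det_le_prod_norm_row_fin _
    _ = ∏ i, ‖WithLp.toLp 2 (A i)‖ := by
      simp only [hrow]
      exact e.symm.prod_comp (fun i => ‖WithLp.toLp 2 (A i)‖)

theorem abs_det_le_rpow_of_sum_sq_row_le {A : Matrix ι ι ℝ} {c : ℝ}
    (h : ∀ i, ∑ j, A i j ^ 2 ≤ c) : |A.det| ≤ c ^ ((Fintype.card ι : ℝ) / 2) := by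
  cases isEmpty_or_nonempty ι with
  | inl _ => simp
  | inr hι =>
    have hc : 0 ≤ c := (Finset.sum_nonneg fun j _ => sq_nonneg _).trans (h hι.some)
    calc |A.det| ≤ ∏ i, ‖WithLp.toLp 2 (A i)‖ := A.abs_det_le_prod_norm_row
      _ ≤ ∏ _i : ι, √c := Finset.prod_le_prod (fun _ _ => norm_nonneg _) fun i _ => by
          simpa [EuclideanSpace.norm_eq] using Real.sqrt_le_sqrt (h i)
      _ = c ^ ((Fintype.card ι : ℝ) / 2) := by
          rw [Finset.prod_const, Finset.card_univ, Real.sqrt_eq_rpow, ← Real.rpow_natCast,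
            ← Real.rpow_mul hc]
          ring_nf

theorem sum_sq_one_sub_row_le {E : Matrix ι ι ℝ} {ε : ℝ} (hE : ∀ i j, |E i j| ≤ ε) (i : ι) :
    ∑ j, (1 - E) i j ^ 2 ≤ 1 + 2 * ε + Fintype.card ι * ε ^ 2 := by
  calc ∑ j, (1 - E) i j ^ 2 = 1 - 2 * E i i + ∑ j, E i j ^ 2 := by
        simp only [sub_apply, one_apply, sub_sq, Finset.sum_add_distrib, Finset.sum_sub_distrib]
        simp
    _ ≤ 1 + 2 * ε + ∑ _j : ι, ε ^ 2 := by
        gcongr ?_ + ?_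
        · linarith [neg_abs_le (E i i), hE i i]
        · exact Finset.sum_le_sum fun j _ => sq_le_sq.2 ((hE i j).trans (le_abs_self ε))
    _ = 1 + 2 * ε + Fintype.card ι * ε ^ 2 := by simp

end Matrix

theorem brent_osborne_smith_bound_general (n : ℕ) (ε : ℝ)
    (E : Matrix (Fin n) (Fin n) ℝ) (hE : ∀ i j, |E i j| ≤ ε) :
    |((1 : Matrix (Fin n) (Fin n) ℝ) - E).det|
      ≤ (1 + 2 * ε + n * ε ^ 2) ^ ((n : ℝ) / 2) := by
  simpa using Matrix.abs_det_le_rpow_of_sum_sq_row_le (Matrix.sum_sq_one_sub_row_le hE)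

theorem brent_osborne_smith_bound (n : ℕ) (hn : 2 ≤ n) (ε : ℝ) (hε : 0 < ε)
    (E : Matrix (Fin n) (Fin n) ℝ) (hE : ∀ i j, |E i j| ≤ ε) :
    |((1 : Matrix (Fin n) (Fin n) ℝ) - E).det|
      ≤ (1 + 2 * ε + n * ε ^ 2) ^ ((n : ℝ) / 2) :=
  brent_osborne_smith_bound_general n ε E hE
end

section
/- Let n ≥ 2 be a natural number, ε > 0 a real number, and E a real n×n matrix with E_{i,i} = 0 for all i and |E_{i,j}| ≤ ε for all i, j. Then |det(I − E)| ≤ (1 + (n−1)·ε²)^(n/2). -/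
/-!
Hadamard's inequality bounds `|det A|` by the product of the Euclidean norms of the columns of `A`.
Each column of `1 - E` has a `1` on the diagonal and `n - 1` further entries of absolute value at
most `ε`, so its squared norm is at most `1 + (n - 1) ε²`.
-/

open Matrix Finset

theorem Matrix.abs_det_le_prod_norm_col {n : ℕ} (A : Matrix (Fin n) (Fin n) ℝ) :
    |A.det| ≤ ∏ j, ‖WithLp.toLp 2 (Aᵀ j)‖ := by
  have : Fact (Module.finrank ℝ (EuclideanSpace ℝ (Fin n)) = n) := ⟨finrank_euclideanSpace_fin⟩
  let b := EuclideanSpace.basisFun (Fin n) ℝ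
  have h := (b.toBasis.orientation).abs_volumeForm_apply_le (fun j => WithLp.toLp 2 (Aᵀ j))
  rw [Orientation.volumeForm_robust' _ b, Module.Basis.det_apply] at h
  convert h using 3
  ext i j
  rfl

theorem Matrix.abs_det_le_rpow_of_norm_col_sq_le {n : ℕ} (A : Matrix (Fin n) (Fin n) ℝ) {B : ℝ}
    (hB : ∀ j, ‖WithLp.toLp 2 (Aᵀ j)‖ ^ 2 ≤ B) : |A.det| ≤ B ^ ((n : ℝ) / 2) := by
  rcases n.eq_zero_or_pos with rfl | hn
  · simp
  have hB₀ : 0 ≤ B := (sq_nonneg _).trans (hB ⟨0, hn⟩)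
  calc |A.det| ≤ ∏ j, ‖WithLp.toLp 2 (Aᵀ j)‖ := A.abs_det_le_prod_norm_col
    _ ≤ ∏ _j : Fin n, √B := prod_le_prod (fun _ _ => norm_nonneg _) fun j _ => Real.le_sqrt_of_sq_le (hB j)
    _ = B ^ ((n : ℝ) / 2) := by
      rw [prod_const, card_univ, Fintype.card_fin, Real.sqrt_eq_rpow, ← Real.rpow_natCast,
        ← Real.rpow_mul hB₀, one_div_mul_eq_div]

theorem Matrix.norm_col_one_sub_sq_le {ι : Type*} [Fintype ι] [DecidableEq ι]
    {E : Matrix ι ι ℝ} {ε : ℝ} (hdiag : ∀ i, E i i = 0) (hE : ∀ i j, |E i j| ≤ ε) (j : ι) :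
    ‖WithLp.toLp 2 ((1 - E)ᵀ j)‖ ^ 2 ≤ 1 + ((Fintype.card ι : ℝ) - 1) * ε ^ 2 := by
  have hoff : ∀ i ∈ univ.erase j, (1 - E) i j ^ 2 ≤ ε ^ 2 := fun i hi => by
    rw [sub_apply, one_apply_ne (ne_of_mem_erase hi), zero_sub, neg_sq]
    exact sq_le_sq.mpr ((hE i j).trans (le_abs_self ε))
  have hcard : ((univ.erase j).card : ℝ) = (Fintype.card ι : ℝ) - 1 := by
    rw [card_erase_of_mem (mem_univ j), card_univ, Nat.cast_pred (Fintype.card_pos_iff.mpr ⟨j⟩)]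
  calc ‖WithLp.toLp 2 ((1 - E)ᵀ j)‖ ^ 2
      = (1 - E) j j ^ 2 + ∑ i ∈ univ.erase j, (1 - E) i j ^ 2 := by
        rw [EuclideanSpace.real_norm_sq_eq, ← add_sum_erase _ _ (mem_univ j)]
        rfl
    _ ≤ 1 + ∑ _i ∈ univ.erase j, ε ^ 2 := by
        rw [sub_apply, one_apply_eq, hdiag, sub_zero, one_pow]
        exact add_le_add le_rfl (sum_le_sum hoff)
    _ = 1 + ((Fintype.card ι : ℝ) - 1) * ε ^ 2 := by rw [sum_const, nsmul_eq_mul, hcard]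

theorem brent_osborne_smith_bound_diag_zero_general (n : ℕ) (ε : ℝ)
    (E : Matrix (Fin n) (Fin n) ℝ) (hdiag : ∀ i, E i i = 0)
    (hE : ∀ i j, |E i j| ≤ ε) :
    |((1 : Matrix (Fin n) (Fin n) ℝ) - E).det|
      ≤ (1 + ((n : ℝ) - 1) * ε ^ 2) ^ ((n : ℝ) / 2) := by
  refine Matrix.abs_det_le_rpow_of_norm_col_sq_le _ fun j => ?_
  simpa only [Fintype.card_fin] using Matrix.norm_col_one_sub_sq_le hdiag hE j

theorem brent_osborne_smith_bound_diag_zero (n : ℕ) (hn : 2 ≤ n) (ε : ℝ) (hε : 0 < ε)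
    (E : Matrix (Fin n) (Fin n) ℝ) (hdiag : ∀ i, E i i = 0)
    (hE : ∀ i j, |E i j| ≤ ε) :
    |((1 : Matrix (Fin n) (Fin n) ℝ) - E).det|
      ≤ (1 + ((n : ℝ) - 1) * ε ^ 2) ^ ((n : ℝ) / 2) :=
  brent_osborne_smith_bound_diag_zero_general n ε E hdiag hE
end

section
/- Let A = (A_{i,j})_{i,j≥1} be an infinite array of real numbers such that the series ∑_i |A_{i,i}| and ∑_{i,j} |A_{i,j}|² converge. For each natural number n ≥ 2 let A(n) denote the n×n matrix of entries A_{i,j} with 1 ≤ i, j ≤ n. If the sequence det(I − A(n)) converges to a real number L as n → ∞, then |L| ≤ exp((1/2)·∑_{i,j=1}^∞ A_{i,j}² − ∑_{i=1}^∞ A_{i,i}). -/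
open Filter

/-! Hadamard's inequality bounds `|det (I - A(n))|` by the product of the row norms, and the squared
norm of row `i` is `1 + (∑ⱼ A i j ^ 2 - 2 A i i) ≤ exp (∑ⱼ A i j ^ 2 - 2 A i i)`. So every truncated
determinant obeys the bound with partial sums in place of the series, and it passes to the limit. -/

open Matrix Finset Topology

theorem Matrix.abs_det_le_prod_norm_rows {n : ℕ} (M : Matrix (Fin n) (Fin n) ℝ) :
    |M.det| ≤ ∏ i, ‖WithLp.toLp 2 (M i)‖ := by
  have : Fact (Module.finrank ℝ (EuclideanSpace ℝ (Fin n)) = n) := ⟨finrank_euclideanSpace_fin⟩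
  let b := EuclideanSpace.basisFun (Fin n) ℝ
  have hdet : M.det = b.toBasis.det fun i => WithLp.toLp 2 (M i) := by
    rw [Module.Basis.det_apply, ← det_transpose]
    congr 1
  rw [hdet, ← b.toBasis.orientation.volumeForm_robust' b]
  exact Orientation.abs_volumeForm_apply_le _ _

theorem Matrix.abs_det_le_prod_sqrt_sum_sq {ι : Type*} [Fintype ι] [DecidableEq ι]
    (M : Matrix ι ι ℝ) : |M.det| ≤ ∏ i, √(∑ j, M i j ^ 2) := by
  let e := Fintype.equivFin ι
  have h := (reindex e e M).abs_det_le_prod_norm_rows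
  simp only [det_reindex_self, EuclideanSpace.norm_eq, Real.norm_eq_abs, sq_abs] at h
  simpa [← e.symm.prod_comp, ← e.symm.sum_comp] using h

theorem Matrix.sum_sq_one_sub_apply {ι R : Type*} [Fintype ι] [DecidableEq ι] [CommRing R]
    (B : Matrix ι ι R) (i : ι) :
    ∑ j, (1 - B) i j ^ 2 = 1 + (∑ j, B i j ^ 2 - 2 * B i i) := by
  simp only [sub_apply, one_apply, sub_sq, ite_pow, one_pow, ne_eq, OfNat.ofNat_ne_zero,
    not_false_eq_true, zero_pow, mul_comm, ite_mul, one_mul, zero_mul, mul_ite, mul_zero,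
    sum_add_distrib, sum_sub_distrib, sum_ite_eq, mem_univ, ↓reduceIte]
  ring

theorem Real.sqrt_one_add_le_exp_half (x : ℝ) : √(1 + x) ≤ exp (x / 2) := by
  rw [exp_half]
  exact sqrt_le_sqrt (by linarith [add_one_le_exp x])

theorem Matrix.abs_det_one_sub_le_exp {ι : Type*} [Fintype ι] [DecidableEq ι] (B : Matrix ι ι ℝ) :
    |(1 - B).det| ≤ Real.exp ((1 / 2) * ∑ i, ∑ j, B i j ^ 2 - ∑ i, B i i) := by
  calc |(1 - B).det| ≤ ∏ i, √(1 + (∑ j, B i j ^ 2 - 2 * B i i)) := by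
        simpa only [sum_sq_one_sub_apply] using (1 - B).abs_det_le_prod_sqrt_sum_sq
    _ ≤ ∏ i, Real.exp ((∑ j, B i j ^ 2 - 2 * B i i) / 2) :=
        prod_le_prod (fun _ _ => Real.sqrt_nonneg _) fun i _ => Real.sqrt_one_add_le_exp_half _
    _ = Real.exp ((1 / 2) * ∑ i, ∑ j, B i j ^ 2 - ∑ i, B i i) := by
        rw [← Real.exp_sum]
        congr 1
        rw [mul_sum, ← sum_sub_distrib]
        exact sum_congr rfl fun i _ => by ring

theorem HasSum.tendsto_sum_range_prod_range {α : Type*} [AddCommMonoid α] [TopologicalSpace α]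
    {f : ℕ × ℕ → α} {a : α} (hf : HasSum f a) :
    Tendsto (fun n => ∑ p ∈ range n ×ˢ range n, f p) atTop (𝓝 a) := by
  have h : Tendsto (fun n : ℕ => (range n, range n)) atTop atTop := by
    rw [← prod_atTop_atTop_eq]
    exact tendsto_finset_range.prodMk tendsto_finset_range
  exact hf.comp (tendsto_finsetProd_atTop.comp h)

theorem abs_det_one_sub_submatrix_le_exp (A : ℕ → ℕ → ℝ) (n : ℕ) :
    |((1 : Matrix (Fin n) (Fin n) ℝ) - Matrix.of fun i j : Fin n => A i j).det| ≤
      Real.exp ((1 / 2) * ∑ p ∈ range n ×ˢ range n, A p.1 p.2 ^ 2 - ∑ i ∈ range n, A i i) := by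
  convert abs_det_one_sub_le_exp (Matrix.of fun i j : Fin n => A i j) using 4
  · rw [sum_product, ← Fin.sum_univ_eq_sum_range]
    exact sum_congr rfl fun i _ => (Fin.sum_univ_eq_sum_range (fun j => A i j ^ 2) n).symm
  · exact (Fin.sum_univ_eq_sum_range (fun i => A i i) n).symm

theorem vonKoch_infinite_determinant_bound (A : ℕ → ℕ → ℝ)
    (hdiag : Summable fun i => |A i i|)
    (hsq : Summable fun p : ℕ × ℕ => |A p.1 p.2| ^ 2)
    (L : ℝ)
    (hL : Tendsto
      (fun n : ℕ =>
        ((1 : Matrix (Fin n) (Fin n) ℝ) - Matrix.of fun i j : Fin n => A i j).det)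
      atTop (nhds L)) :
    |L| ≤ Real.exp ((1 / 2) * (∑' p : ℕ × ℕ, (A p.1 p.2) ^ 2) - ∑' i, A i i) := by
  have hsq' : Summable fun p : ℕ × ℕ => A p.1 p.2 ^ 2 := by simpa only [sq_abs] using hsq
  have hbound : Tendsto (fun n : ℕ =>
      Real.exp ((1 / 2) * ∑ p ∈ range n ×ˢ range n, A p.1 p.2 ^ 2 - ∑ i ∈ range n, A i i))
      atTop (𝓝 (Real.exp ((1 / 2) * (∑' p : ℕ × ℕ, A p.1 p.2 ^ 2) - ∑' i, A i i))) :=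
    (Real.continuous_exp.tendsto _).comp
      ((hsq'.hasSum.tendsto_sum_range_prod_range.const_mul _).sub
        hdiag.of_abs.hasSum.tendsto_sum_nat)
  exact le_of_tendsto_of_tendsto' hL.abs hbound (abs_det_one_sub_submatrix_le_exp A)
end
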